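/- arXiv:1907.03664 — 4 statements merged into one kernel-verified Lean document; each statement's English description precedes it below -/
import Mathlib

section
/- Let M : Matrix (Fin d) (Fin d) ℝ be symmetric (M = Mᵀ) with all entries nonnegative, and let σ(M) : Matrix (Fin d × Fin d) (Fin d × Fin d) ℂ be the diagonal matrix with σ(M) (i,j) (i,j) = M i j and all other entries 0. Then the least r ∈ ℕ such that there exist A k : Matrix (Fin d) (Fin d) ℂ (k < r) with σ(M) = Σ_{k<r} A k ⊗ₖ A k equals the symmetric rank symm-rank(M), i.e. the least r such that there exists A : Matrix (Fin d) (Fin r) ℂ with the entrywise complexification of M equal to A * Aᵀ. -/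
open Matrix Kronecker
open scoped BigOperators

/-- The diagonal psd matrix associated to a nonnegative symmetric matrix `M`. -/
noncomputable def sigmaM {d : ℕ} (M : Matrix (Fin d) (Fin d) ℝ) :
    Matrix (Fin d × Fin d) (Fin d × Fin d) ℂ :=
  Matrix.diagonal (fun p : Fin d × Fin d => (M p.1 p.2 : ℂ))

/-!
A decomposition `diagonal N = ∑ₖ Aₖ ⊗ Aₖ` only sees the diagonal entries of the `Aₖ`:
reading off the diagonal gives `N i j = ∑ₖ (Aₖ)ᵢᵢ (Aₖ)ⱼⱼ`, i.e. `N = B Bᵀ` with `B i k = (Aₖ)ᵢᵢ`.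
Conversely the columns of a factor `B` of `N = B Bᵀ` give the decomposition with
`Aₖ = diagonal (B · k)`. So both minimisation problems range over the same set of lengths `r`.
-/

namespace Matrix

variable {n ι R : Type*} [Fintype ι] [CommSemiring R]

theorem diag_sum_kronecker_self (A : ι → Matrix n n R) (i j : n) :
    (∑ k, A k ⊗ₖ A k).diag (i, j) = (of (fun i k => A k i i) * (of (fun i k => A k i i))ᵀ) i j := by
  simp [sum_apply, mul_apply]

theorem diagonal_mul_transpose_eq_sum_kronecker [DecidableEq n] (B : Matrix n ι R) :
    diagonal (fun p : n × n => (B * Bᵀ) p.1 p.2) =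
      ∑ k, diagonal (fun i => B i k) ⊗ₖ diagonal (fun i => B i k) := by
  ext p q
  simp only [diagonal_kronecker_diagonal, sum_apply, diagonal_apply, mul_apply, transpose_apply]
  split_ifs <;> simp

theorem exists_diagonal_eq_sum_kronecker_self_iff [DecidableEq n] (N : Matrix n n R) :
    (∃ A : ι → Matrix n n R, diagonal (fun p : n × n => N p.1 p.2) = ∑ k, A k ⊗ₖ A k) ↔
      ∃ B : Matrix n ι R, N = B * Bᵀ := by
  constructor
  · rintro ⟨A, hA⟩
    refine ⟨of fun i k => A k i i, ext fun i j => ?_⟩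
    rw [← diag_sum_kronecker_self, ← hA, diag_diagonal]
  · rintro ⟨B, rfl⟩
    exact ⟨fun k => diagonal (fun i => B i k), diagonal_mul_transpose_eq_sum_kronecker B⟩

end Matrix

theorem tiOsr_sigmaM_eq_symmRank_general {d : ℕ} (M : Matrix (Fin d) (Fin d) ℝ) :
    sInf {r : ℕ | ∃ A : Fin r → Matrix (Fin d) (Fin d) ℂ,
        sigmaM M = ∑ k, A k ⊗ₖ A k} =
    sInf {r : ℕ | ∃ A : Matrix (Fin d) (Fin r) ℂ,
        M.map (fun x => (x : ℂ)) = A * Aᵀ} := by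
  congr 1
  ext r
  exact exists_diagonal_eq_sum_kronecker_self_iff (M.map (fun x => (x : ℂ)))

/-- The symmetric (t.i.) operator Schmidt rank of `σ(M)` equals the symmetric rank of `M`. -/
theorem tiOsr_sigmaM_eq_symmRank {d : ℕ} (M : Matrix (Fin d) (Fin d) ℝ)
    (hsymm : M = Mᵀ) (hM : ∀ i j, 0 ≤ M i j) :
    sInf {r : ℕ | ∃ A : Fin r → Matrix (Fin d) (Fin d) ℂ,
        sigmaM M = ∑ k, A k ⊗ₖ A k} =
    sInf {r : ℕ | ∃ A : Matrix (Fin d) (Fin r) ℂ,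
        M.map (fun x => (x : ℂ)) = A * Aᵀ} :=
  tiOsr_sigmaM_eq_symmRank_general M
end

section
/- Let M : Matrix (Fin d) (Fin d) ℝ be symmetric (M = Mᵀ) with all entries nonnegative, and let σ(M) : Matrix (Fin d × Fin d) (Fin d × Fin d) ℂ be the diagonal matrix with σ(M) (i,j) (i,j) = M i j and all other entries 0. Then the least r (as an infimum in ℕ∞) such that there exist positive semidefinite χ k : Matrix (Fin d) (Fin d) ℂ (k < r) with σ(M) = Σ_{k<r} χ k ⊗ₖ χ k equals the completely positive rank cp-rank(M), i.e. the least r (in ℕ∞) such that there exists an entrywise nonnegative A : Matrix (Fin d) (Fin r) ℝ with M = A * Aᵀ. In particular, one kind of decomposition exists if and only if the other does. -/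
open Matrix Kronecker
open scoped BigOperators ComplexOrder

/-!
Only the diagonal of `σ(M) = ∑ k, χ k ⊗ₖ χ k` matters: its `((i, j), (i, j))` entry gives
`M i j = ∑ k, χ k i i * χ k j j`, and the diagonal entries of the psd `χ k` are nonnegative reals,
so they are the columns of a cp factor of `M`. Conversely the columns `a` of a cp factor give the
diagonal psd matrices `diagonal a`, and `diagonal a ⊗ₖ diagonal a = diagonal (a i * a j)`.
-/

namespace Matrix

theorem sum_diagonal_kronecker_diagonal {ι m n α : Type*} [Fintype ι] [DecidableEq m]
    [DecidableEq n] [NonUnitalNonAssocSemiring α] (a : ι → m → α) (b : ι → n → α) :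
    ∑ k, diagonal (a k) ⊗ₖ diagonal (b k) = diagonal fun p => ∑ k, a k p.1 * b k p.2 := by
  simp_rw [diagonal_kronecker_diagonal]
  ext p q
  simp [sum_apply, diagonal_apply, Finset.sum_ite_irrel]

end Matrix

theorem sigmaM_mul_transpose {d : ℕ} {ι : Type*} [Fintype ι] (A : Matrix (Fin d) ι ℝ) :
    sigmaM (A * Aᵀ) = ∑ k, diagonal (fun i => (A i k : ℂ)) ⊗ₖ diagonal (fun i => (A i k : ℂ)) := by
  rw [sum_diagonal_kronecker_diagonal]
  simp [sigmaM, mul_apply]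

theorem eq_mul_transpose_of_sigmaM_eq_sum_kronecker {d : ℕ} {ι : Type*} [Fintype ι]
    {M : Matrix (Fin d) (Fin d) ℝ} {χ : ι → Matrix (Fin d) (Fin d) ℂ}
    (hχ : ∀ k, (χ k).IsHermitian) (h : sigmaM M = ∑ k, χ k ⊗ₖ χ k) :
    M = of (fun i k => (χ k i i).re) * (of fun i k => (χ k i i).re)ᵀ := by
  ext i j
  apply Complex.ofReal_injective
  have hij := congr_fun₂ h (i, j) (i, j)
  simp only [sigmaM, diagonal_apply_eq, Matrix.sum_apply, kroneckerMap_apply] at hij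
  have hre (k : ι) (i : Fin d) : ((χ k i i).re : ℂ) = χ k i i := (hχ k).coe_re_apply_self i
  simp [hij, mul_apply, hre]

theorem tiSepRank_sigmaM_eq_cpRank_general {d : ℕ} (M : Matrix (Fin d) (Fin d) ℝ) :
    sInf {c : ℕ∞ | ∃ (r : ℕ) (χ : Fin r → Matrix (Fin d) (Fin d) ℂ),
        (∀ k, (χ k).PosSemidef) ∧ sigmaM M = ∑ k, χ k ⊗ₖ χ k ∧ c = (r : ℕ∞)} =
    sInf {c : ℕ∞ | ∃ (r : ℕ) (A : Matrix (Fin d) (Fin r) ℝ),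
        (∀ i k, 0 ≤ A i k) ∧ M = A * Aᵀ ∧ c = (r : ℕ∞)} := by
  congr 1
  ext c
  constructor
  · rintro ⟨r, χ, hχ, h, rfl⟩
    exact ⟨r, _, fun i k => (Complex.nonneg_iff.mp (hχ k).diag_nonneg).1,
      eq_mul_transpose_of_sigmaM_eq_sum_kronecker (fun k => (hχ k).isHermitian) h, rfl⟩
  · rintro ⟨r, A, hA, rfl, rfl⟩
    exact ⟨r, _, fun k => PosSemidef.diagonal fun i => Complex.zero_le_real.mpr (hA i k),
      sigmaM_mul_transpose A, rfl⟩

/-- The symmetric (t.i.) separable rank of `σ(M)` equals the cp rank of `M`,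
as infima in `ℕ∞` (so in particular one decomposition exists iff the other does). -/
theorem tiSepRank_sigmaM_eq_cpRank {d : ℕ} (M : Matrix (Fin d) (Fin d) ℝ)
    (hsymm : M = Mᵀ) (hM : ∀ i j, 0 ≤ M i j) :
    sInf {c : ℕ∞ | ∃ (r : ℕ) (χ : Fin r → Matrix (Fin d) (Fin d) ℂ),
        (∀ k, (χ k).PosSemidef) ∧ sigmaM M = ∑ k, χ k ⊗ₖ χ k ∧ c = (r : ℕ∞)} =
    sInf {c : ℕ∞ | ∃ (r : ℕ) (A : Matrix (Fin d) (Fin r) ℝ),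
        (∀ i k, 0 ≤ A i k) ∧ M = A * Aᵀ ∧ c = (r : ℕ∞)} :=
  tiSepRank_sigmaM_eq_cpRank_general M
end

section
/- Let M : Matrix (Fin d) (Fin d) ℝ be symmetric (M = Mᵀ) with all entries nonnegative, and let σ(M) : Matrix (Fin d × Fin d) (Fin d × Fin d) ℂ be the diagonal matrix with σ(M) (i,j) (i,j) = M i j and all other entries 0. Then the least r ∈ ℕ such that there exist d' ∈ ℕ and C k : Matrix (Fin d) (Fin d') ℂ (k < r) with L = Σ_{k<r} C k ⊗ₖ C k satisfying L * Lᴴ = σ(M) equals the complex completely positive semidefinite transposed rank cpsdt-rank^ℂ(M), i.e. the least r such that there exist positive semidefinite E i : Matrix (Fin r) (Fin r) ℂ (i : Fin d) with (M i j : ℂ) = Matrix.trace (E i * (E j)ᵀ) for all i, j. -/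
open Matrix Kronecker
open scoped BigOperators ComplexOrder

/-!
Let `B i` be the matrix whose `k`-th row is the `i`-th row of `C k`. The row `(i, j)` of
`L = ∑ k, C k ⊗ₖ C k` is then `(B i)ᵀ * B j`, so `(L * Lᴴ) (i, j) (i', j')` is
`tr (G i i' * (G j j')ᵀ)` for the Gram blocks `G i i' = B i * (B i')ᴴ`. A purification of `σ(M)`
thus yields the psd matrices `E i = G i i`. Conversely, factor `E i = F i * (F i)ᴴ` and let `B i`
be the `i`-th block row of `blockDiagonal F`: the blocks `G i i'` with `i ≠ i'` vanish, so
`L * Lᴴ = σ(M)`. Both constructions keep the number of terms.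
-/

namespace Matrix

variable {ρ ι κ : Type*} [Fintype ρ]

def rowSlice (C : ρ → Matrix ι κ ℂ) (i : ι) : Matrix ρ κ ℂ :=
  of fun k a => C k i a

lemma sum_kronecker_self_apply (C : ρ → Matrix ι κ ℂ) (i j : ι) (a b : κ) :
    (∑ k, C k ⊗ₖ C k) (i, j) (a, b) = ((rowSlice C i)ᵀ * rowSlice C j) a b := by
  simp [Matrix.sum_apply, mul_apply, rowSlice]

variable [Fintype κ]

lemma sum_kronecker_self_mul_conjTranspose_apply (C : ρ → Matrix ι κ ℂ) (i j i' j' : ι) :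
    ((∑ k, C k ⊗ₖ C k) * (∑ k, C k ⊗ₖ C k)ᴴ) (i, j) (i', j') =
      trace (rowSlice C i * (rowSlice C i')ᴴ * (rowSlice C j * (rowSlice C j')ᴴ)ᵀ) := by
  calc ((∑ k, C k ⊗ₖ C k) * (∑ k, C k ⊗ₖ C k)ᴴ) (i, j) (i', j')
      = trace ((rowSlice C i)ᵀ * rowSlice C j * ((rowSlice C i')ᵀ * rowSlice C j')ᴴ) := by
        simp only [mul_apply, trace, diag, conjTranspose_apply, Fintype.sum_prod_type,
          sum_kronecker_self_apply]
    _ = _ := by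
        rw [← trace_transpose]
        simp only [transpose_mul, conjTranspose_mul, transpose_transpose, Matrix.mul_assoc,
          conjTranspose_transpose_eq_transpose_conjTranspose]
        rw [trace_mul_comm (rowSlice C i)]
        simp only [Matrix.mul_assoc]

lemma sum_kronecker_self_submatrix_mul_conjTranspose {κ' : Type*} [Fintype κ']
    (C : ρ → Matrix ι κ ℂ) (e : κ' ≃ κ) :
    (∑ k, (C k).submatrix id e ⊗ₖ (C k).submatrix id e) *
        (∑ k, (C k).submatrix id e ⊗ₖ (C k).submatrix id e)ᴴ =
      (∑ k, C k ⊗ₖ C k) * (∑ k, C k ⊗ₖ C k)ᴴ := by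
  have hslice : ∀ i, rowSlice (fun k => (C k).submatrix id e) i = (rowSlice C i).submatrix id e :=
    fun _ => rfl
  ext ⟨i, j⟩ ⟨i', j'⟩
  simp only [sum_kronecker_self_mul_conjTranspose_apply, hslice, conjTranspose_submatrix,
    submatrix_mul_equiv, submatrix_id_id]

theorem exists_posSemidef_trace_mul_transpose_of_sum_kronecker_self [DecidableEq ι]
    (C : ρ → Matrix ι κ ℂ) (M : Matrix ι ι ℝ)
    (hC : (∑ k, C k ⊗ₖ C k) * (∑ k, C k ⊗ₖ C k)ᴴ = diagonal fun p => (M p.1 p.2 : ℂ)) :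
    ∃ E : ι → Matrix ρ ρ ℂ, (∀ i, (E i).PosSemidef) ∧
      ∀ i j, (M i j : ℂ) = trace (E i * (E j)ᵀ) :=
  ⟨fun i => rowSlice C i * (rowSlice C i)ᴴ, fun i => posSemidef_self_mul_conjTranspose _,
    fun i j => by rw [← sum_kronecker_self_mul_conjTranspose_apply, hC, diagonal_apply_eq]⟩

lemma submatrix_blockDiagonal_mul_conjTranspose [Fintype ι] [DecidableEq ι]
    (F : ι → Matrix ρ ρ ℂ) (i i' : ι) :
    (blockDiagonal F).submatrix (·, i) id * ((blockDiagonal F).submatrix (·, i') id)ᴴ =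
      if i = i' then F i * (F i)ᴴ else 0 := by
  rw [conjTranspose_submatrix, ← submatrix_mul _ _ _ _ _ Function.bijective_id,
    blockDiagonal_conjTranspose, ← blockDiagonal_mul]
  ext k l
  split_ifs with h
  · simp only [submatrix_apply, blockDiagonal_apply', h, if_true]
  · simp only [submatrix_apply, blockDiagonal_apply', h, if_false, zero_apply]

open scoped MatrixOrder in
theorem exists_sum_kronecker_self_of_posSemidef_trace_mul_transpose [Fintype ι] [DecidableEq ι]
    (E : ι → Matrix ρ ρ ℂ) (hE : ∀ i, (E i).PosSemidef) (M : Matrix ι ι ℝ)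
    (hM : ∀ i j, (M i j : ℂ) = trace (E i * (E j)ᵀ)) :
    ∃ C : ρ → Matrix ι (ρ × ι) ℂ,
      (∑ k, C k ⊗ₖ C k) * (∑ k, C k ⊗ₖ C k)ᴴ = diagonal fun p => (M p.1 p.2 : ℂ) := by
  classical
  choose F hF using fun i => CStarAlgebra.nonneg_iff_eq_mul_star_self.mp (hE i).nonneg
  let C : ρ → Matrix ι (ρ × ι) ℂ := fun k => of fun i p => blockDiagonal F (k, i) p
  have hslice : ∀ i, rowSlice C i = (blockDiagonal F).submatrix (·, i) id := fun _ => rfl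
  refine ⟨C, ?_⟩
  ext ⟨i, j⟩ ⟨i', j'⟩
  simp only [sum_kronecker_self_mul_conjTranspose_apply, hslice,
    submatrix_blockDiagonal_mul_conjTranspose, ← star_eq_conjTranspose, ← hF, diagonal_apply,
    Prod.mk.injEq]
  by_cases hi : i = i' <;> by_cases hj : j = j' <;> simp [hi, hj, hM]

end Matrix

theorem tiPuriRank_sigmaM_eq_cpsdtRank_general {d : ℕ} (M : Matrix (Fin d) (Fin d) ℝ) :
    sInf {r : ℕ | ∃ (d' : ℕ) (C : Fin r → Matrix (Fin d) (Fin d') ℂ),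
        (∑ k, C k ⊗ₖ C k) * (∑ k, C k ⊗ₖ C k)ᴴ = sigmaM M} =
    sInf {r : ℕ | ∃ E : Fin d → Matrix (Fin r) (Fin r) ℂ,
        (∀ i, (E i).PosSemidef) ∧
        ∀ i j, (M i j : ℂ) = Matrix.trace (E i * (E j)ᵀ)} := by
  congr 1
  ext r
  constructor
  · rintro ⟨d', C, hC⟩
    exact exists_posSemidef_trace_mul_transpose_of_sum_kronecker_self C M hC
  · rintro ⟨E, hE, hM⟩
    obtain ⟨C, hC⟩ := exists_sum_kronecker_self_of_posSemidef_trace_mul_transpose E hE M hM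
    exact ⟨_, fun k => (C k).submatrix id (Fintype.equivFin _).symm,
      (sum_kronecker_self_submatrix_mul_conjTranspose C _).trans hC⟩

/-- The symmetric (t.i.) purification rank of `σ(M)` equals the complex cpsdt rank of `M`. -/
theorem tiPuriRank_sigmaM_eq_cpsdtRank {d : ℕ} (M : Matrix (Fin d) (Fin d) ℝ)
    (hsymm : M = Mᵀ) (hM : ∀ i j, 0 ≤ M i j) :
    sInf {r : ℕ | ∃ (d' : ℕ) (C : Fin r → Matrix (Fin d) (Fin d') ℂ),
        (∑ k, C k ⊗ₖ C k) * (∑ k, C k ⊗ₖ C k)ᴴ = sigmaM M} =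
    sInf {r : ℕ | ∃ E : Fin d → Matrix (Fin r) (Fin r) ℂ,
        (∀ i, (E i).PosSemidef) ∧
        ∀ i j, (M i j : ℂ) = Matrix.trace (E i * (E j)ᵀ)} :=
  tiPuriRank_sigmaM_eq_cpsdtRank_general M
end

section
/- Let ρ : Matrix (Fin d₁ × Fin d₂) (Fin d₁ × Fin d₂) ℂ be positive semidefinite and let τ : Matrix (Fin d₁ × Fin d₂) (Fin d₁ × Fin d₂) ℂ be Hermitian with τ * τ = ρ. Then puri-rank(ρ) ≤ osr(τ). In particular, puri-rank(ρ) is at most the quantum square root rank of ρ, the minimum of osr(τ) over all Hermitian square roots τ of ρ. -/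
open Matrix Kronecker
open scoped BigOperators ComplexOrder

/-- Operator Schmidt rank of a bipartite matrix. -/
noncomputable def osr {d₁ d₂ : ℕ} (τ : Matrix (Fin d₁ × Fin d₂) (Fin d₁ × Fin d₂) ℂ) : ℕ :=
  sInf {r : ℕ | ∃ (A : Fin r → Matrix (Fin d₁) (Fin d₁) ℂ)
      (B : Fin r → Matrix (Fin d₂) (Fin d₂) ℂ),
      τ = ∑ k, A k ⊗ₖ B k}

/-- Purification rank. -/
noncomputable def puriRank {d₁ d₂ : ℕ}
    (ρ : Matrix (Fin d₁ × Fin d₂) (Fin d₁ × Fin d₂) ℂ) : ℕ :=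
  sInf {r : ℕ | ∃ (d₁' d₂' : ℕ) (L₁ : Fin r → Matrix (Fin d₁) (Fin d₁') ℂ)
    (L₂ : Fin r → Matrix (Fin d₂) (Fin d₂') ℂ),
    (∑ k, L₁ k ⊗ₖ L₂ k) * (∑ k, L₁ k ⊗ₖ L₂ k)ᴴ = ρ}

lemma osr_set_nonempty {d₁ d₂ : ℕ} (τ : Matrix (Fin d₁ × Fin d₂) (Fin d₁ × Fin d₂) ℂ) :
    {r : ℕ | ∃ (A : Fin r → Matrix (Fin d₁) (Fin d₁) ℂ)
      (B : Fin r → Matrix (Fin d₂) (Fin d₂) ℂ),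
      τ = ∑ k, A k ⊗ₖ B k}.Nonempty := by
  refine ⟨d₁ * d₁, fun k => Matrix.single (finProdFinEquiv.symm k).2
      (finProdFinEquiv.symm k).1 1,
    fun k => Matrix.of (fun a b => τ ((finProdFinEquiv.symm k).2, a)
      ((finProdFinEquiv.symm k).1, b)), ?_⟩
  ext ⟨i, a⟩ ⟨j, b⟩
  rw [Matrix.sum_apply]
  rw [Fintype.sum_equiv finProdFinEquiv.symm _
    (fun p : Fin d₁ × Fin d₁ =>
      (Matrix.single p.2 p.1 (1:ℂ) ⊗ₖ
        Matrix.of (fun a b => τ (p.2, a) (p.1, b))) (i,a) (j,b))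
    (fun k => rfl)]
  rw [Fintype.sum_prod_type]
  simp only [Matrix.kroneckerMap_apply, Matrix.of_apply, Matrix.single]
  rw [Finset.sum_eq_single j]
  · rw [Finset.sum_eq_single i]
    · simp
    · intro x _ hx; simp [hx]
    · simp
  · intro x _ hx
    apply Finset.sum_eq_zero
    intro y _
    simp [hx]
  · simp

/-- The purification rank is at most the operator Schmidt rank of any Hermitian square root. -/
theorem puriRank_le_osr_of_hermitian_sqrt {d₁ d₂ : ℕ}
    (ρ τ : Matrix (Fin d₁ × Fin d₂) (Fin d₁ × Fin d₂) ℂ)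
    (hρ : ρ.PosSemidef) (hτ : τᴴ = τ) (hsq : τ * τ = ρ) :
    puriRank ρ ≤ osr τ := by
  obtain ⟨A, B, hAB⟩ := Nat.sInf_mem (osr_set_nonempty τ)
  apply Nat.sInf_le
  refine ⟨d₁, d₂, A, B, ?_⟩
  unfold osr
  rw [← hAB, hτ, hsq]
end
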